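/- Let f : ℝ → ℝ be continuously differentiable with f′(t) ≠ 0 for all t ∈ ℝ, and let (θ, ψ) : [0, ∞) → ℝ² be a differentiable curve satisfying θ′(t) = −f′(θ(t)ψ(t))ψ(t) and ψ′(t) = f′(θ(t)ψ(t))θ(t) for all t. Then the function t ↦ θ(t)² + ψ(t)² is constant on [0, ∞); in particular no integral curve with (θ(0), ψ(0)) ≠ (0, 0) converges to the Nash equilibrium (0, 0). -/

import Mathlib

/-!
Along any curve with `θ' = -a ψ` and `ψ' = a θ`, whatever the scalar `a(t)`, the velocity is
orthogonal to the position, so `(θ² + ψ²)' = 2θθ' + 2ψψ' = 0`. Hence `θ² + ψ²` is constant on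
`[0, ∞)` by the mean value inequality, and a curve starting away from the origin stays on a
circle of positive radius around it.
-/

open Filter Set Topology

theorem Convex.eq_of_hasDerivWithinAt_zero {E : Type*} [NormedAddCommGroup E] [NormedSpace ℝ E]
    {f : ℝ → E} {s : Set ℝ} (hs : Convex ℝ s) (hf : ∀ x ∈ s, HasDerivWithinAt f 0 s x)
    {x y : ℝ} (hx : x ∈ s) (hy : y ∈ s) : f y = f x := by
  have h := hs.norm_image_sub_le_of_norm_hasDerivWithin_le (C := 0) hf
    (fun _ _ => norm_zero.le) hx hy
  simpa only [zero_mul, norm_le_zero_iff, sub_eq_zero] using h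

theorem HasDerivWithinAt.sq_add_sq_of_rotation {x y : ℝ → ℝ} {a t : ℝ} {s : Set ℝ}
    (hx : HasDerivWithinAt x (-a * y t) s t) (hy : HasDerivWithinAt y (a * x t) s t) :
    HasDerivWithinAt (fun t => x t ^ 2 + y t ^ 2) 0 s t :=
  ((hx.fun_pow 2).fun_add (hy.fun_pow 2)).congr_deriv (by ring)

theorem not_tendsto_zero_of_eventually_sq_add_sq_eq {α : Type*} {l : Filter α} [l.NeBot]
    {x y : α → ℝ} {c : ℝ} (hc : c ≠ 0) (h : ∀ᶠ t in l, x t ^ 2 + y t ^ 2 = c) :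
    ¬ Tendsto (fun t => (x t, y t)) l (𝓝 (0, 0)) := by
  intro hxy
  have hcont : Continuous fun p : ℝ × ℝ => p.1 ^ 2 + p.2 ^ 2 := by fun_prop
  have hzero : Tendsto (fun t => x t ^ 2 + y t ^ 2) l (𝓝 0) := by
    simpa only [Function.comp_def, zero_pow two_ne_zero, add_zero] using
      (hcont.tendsto (0, 0)).comp hxy
  exact hc (tendsto_nhds_unique (tendsto_const_nhds.congr' (h.mono fun _ ht => ht.symm)) hzero)

theorem dirac_gan_continuous_dynamics_not_convergent
    (f : ℝ → ℝ)
    (θ ψ : ℝ → ℝ)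
    (hθ : ∀ t ∈ Set.Ici (0 : ℝ),
      HasDerivWithinAt θ (-(deriv f (θ t * ψ t)) * ψ t) (Set.Ici (0 : ℝ)) t)
    (hψ : ∀ t ∈ Set.Ici (0 : ℝ),
      HasDerivWithinAt ψ (deriv f (θ t * ψ t) * θ t) (Set.Ici (0 : ℝ)) t) :
    (∀ t ∈ Set.Ici (0 : ℝ), θ t ^ 2 + ψ t ^ 2 = θ 0 ^ 2 + ψ 0 ^ 2) ∧
    ((θ 0, ψ 0) ≠ (0, 0) →
      ¬ Filter.Tendsto (fun t => (θ t, ψ t)) Filter.atTop (nhds ((0 : ℝ), (0 : ℝ)))) := by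
  have hconst : ∀ t ∈ Ici (0 : ℝ), θ t ^ 2 + ψ t ^ 2 = θ 0 ^ 2 + ψ 0 ^ 2 := fun t ht =>
    (convex_Ici 0).eq_of_hasDerivWithinAt_zero
      (fun s hs => (hθ s hs).sq_add_sq_of_rotation (hψ s hs)) self_mem_Ici ht
  refine ⟨hconst, fun hne => not_tendsto_zero_of_eventually_sq_add_sq_eq ?_
    (eventually_atTop.2 ⟨0, hconst⟩)⟩
  rw [sq, sq, Ne, mul_self_add_mul_self_eq_zero]
  exact fun h => hne (Prod.ext h.1 h.2)
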